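/- For every analytic equivalence relation E on Cantor space (E an analytic subset of 2^ω × 2^ω) there exists a family (E_α), indexed by the countable ordinals α < ω₁, of equivalence relations on 2^ω such that: (i) each E_α is a Borel subset of 2^ω × 2^ω; (ii) the family is decreasing, i.e., if α ≤ β < ω₁ then E_β ⊆ E_α; and (iii) E = ⋂_{α < ω₁} E_α, i.e., for all X, Y: X E Y iff X E_α Y for every α < ω₁. -/

import Mathlib

open MeasureTheory

/-- Cantor space `2^ω`. -/
abbrev Cantor : Type := ℕ → Bool

/-!
Write `E` as the range of a continuous `f : ℕ^ℕ → 2^ω × 2^ω` and attach to each pair `p` the tree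
`T_p` of finite sequences `s` with `p ∈ closure (f '' [s])`. Then `p ∈ E` iff `T_p` has a branch
iff `T_p` has rank at least `ω₁`, so the sets `E_α` of pairs whose tree has rank at least `α` are
Borel for `α < ω₁`, decrease, and intersect to `E`. The boundedness theorem, applied to the Borel
set of triples `(x, y, z)` with `(x, z) ∉ E_α`, turns transitivity of `E` into some `β < ω₁` with
`E_β ∘ E_β ⊆ E_α`. Hence at the limit ordinals `δ < ω₁` closed under `α ↦ β`, which are unbounded
in `ω₁`, the symmetrised `E_δ` is an equivalence relation; reindex by these `δ`.
-/

open Ordinal Order Set Filter Topology PiNat SetRel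

section Rank

variable {ι : Type*} {P : List ι → Prop}

/-- Nodes grow by consing, as in `PiNat.res`. The tree need not be well-founded: the nodes on a
branch have every rank. -/
def RankGE (P : List ι → Prop) : Ordinal.{0} → List ι → Prop
  | α, s => P s ∧ ∀ β < α, ∃ i, RankGE P β (i :: s)
termination_by α _ => α

theorem rankGE_iff {α : Ordinal.{0}} {s : List ι} :
    RankGE P α s ↔ P s ∧ ∀ β < α, ∃ i, RankGE P β (i :: s) := by
  rw [RankGE]

theorem RankGE.prop {α : Ordinal.{0}} {s : List ι} (h : RankGE P α s) : P s :=
  (rankGE_iff.1 h).1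

theorem RankGE.mono {α β : Ordinal.{0}} {s : List ι} (h : RankGE P α s) (hβ : β ≤ α) :
    RankGE P β s :=
  rankGE_iff.2 ⟨h.prop, fun γ hγ => (rankGE_iff.1 h).2 γ (hγ.trans_le hβ)⟩

theorem rankGE_iff_forall_lt {δ : Ordinal.{0}} (hδ : IsSuccLimit δ) {s : List ι} :
    RankGE P δ s ↔ ∀ γ < δ, RankGE P γ s := by
  refine ⟨fun h γ hγ => h.mono hγ.le, fun h => rankGE_iff.2 ⟨(h ⊥ hδ.bot_lt).prop, ?_⟩⟩
  exact fun β hβ => (rankGE_iff.1 (h _ (hδ.succ_lt hβ))).2 β (lt_succ β)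

theorem RankGE.prodMk {κ : Type*} {Q : List κ → Prop} {α : Ordinal.{0}} {l : List (ι × κ)}
    (hP : RankGE P α (l.map Prod.fst)) (hQ : RankGE Q α (l.map Prod.snd)) :
    RankGE (fun m => P (m.map Prod.fst) ∧ Q (m.map Prod.snd)) α l := by
  induction α using WellFoundedLT.induction generalizing l with
  | ind α ih =>
    rw [rankGE_iff] at hP hQ ⊢
    refine ⟨⟨hP.1, hQ.1⟩, fun β hβ => ?_⟩
    obtain ⟨i, hi⟩ := hP.2 β hβ
    obtain ⟨j, hj⟩ := hQ.2 β hβ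
    exact ⟨(i, j), ih β hβ hi hj⟩

theorem rankGE_res_of_forall {b : ℕ → ι} (hb : ∀ n, P (res b n)) (α : Ordinal.{0}) (n : ℕ) :
    RankGE P α (res b n) := by
  induction α using WellFoundedLT.induction generalizing n with
  | ind α ih => exact rankGE_iff.2 ⟨hb n, fun β hβ => ⟨b n, ih β hβ (n + 1)⟩⟩

theorem exists_forall_rankGE_cons [Countable ι] {s : List ι} (hs : ∀ β < ω₁, RankGE P β s) :
    ∃ i, ∀ β < ω₁, RankGE P β (i :: s) := by
  by_contra! h
  choose β hβ hβs using h
  have hsup : (⨆ i, β i) < ω₁ := iSup_lt_omega_one hβ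
  obtain ⟨i, hi⟩ :=
    (rankGE_iff.1 (hs _ ((Cardinal.isSuccLimit_omega 1).succ_lt hsup))).2 _ (lt_succ _)
  exact hβs i (hi.mono (Ordinal.le_iSup β i))

theorem exists_res_of_forall_rankGE [Countable ι] (h : ∀ β < ω₁, RankGE P β []) :
    ∃ b : ℕ → ι, ∀ n, P (res b n) := by
  let N := {s : List ι // ∀ β < ω₁, RankGE P β s}
  choose next hnext using fun s : N => exists_forall_rankGE_cons s.2
  let node : ℕ → N := fun n => n.rec ⟨[], h⟩ fun _ s => ⟨next s :: s.1, hnext s⟩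
  have hres : ∀ n, res (fun k => next (node k)) n = (node n).1 := by
    intro n
    induction n with
    | zero => rfl
    | succ n ih => rw [res_succ, ih]
  exact ⟨fun k => next (node k), fun n => hres n ▸ ((node n).2 0 (omega_pos 1)).prop⟩

theorem forall_rankGE_iff_exists_res [Countable ι] :
    (∀ β < ω₁, RankGE P β []) ↔ ∃ b : ℕ → ι, ∀ n, P (res b n) :=
  ⟨exists_res_of_forall_rankGE, fun ⟨_, hb⟩ β _ => rankGE_res_of_forall hb β 0⟩

theorem countable_Iio_of_lt_omega_one {α : Ordinal.{0}} (hα : α < ω₁) : Countable (Iio α) := by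
  rw [countable_coe_iff, ← Cardinal.le_aleph0_iff_set_countable, Cardinal.mk_Iio_ordinal,
    Cardinal.lift_le_aleph0, ← Cardinal.lt_aleph_one_iff, ← Cardinal.lt_ord, Cardinal.ord_aleph]
  exact hα

theorem measurableSet_setOf_rankGE [Countable ι] {X : Type*} [MeasurableSpace X]
    {D : List ι → Set X} (hD : ∀ s, MeasurableSet (D s)) {α : Ordinal.{0}} (hα : α < ω₁)
    (s : List ι) : MeasurableSet {x | RankGE (fun t => x ∈ D t) α s} := by
  induction α using WellFoundedLT.induction generalizing s with
  | ind α ih =>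
    have := countable_Iio_of_lt_omega_one hα
    have hset : {x | RankGE (fun t => x ∈ D t) α s} =
        D s ∩ ⋂ β : Iio α, ⋃ i, {x | RankGE (fun t => x ∈ D t) β (i :: s)} := by
      ext x
      simp only [mem_inter_iff, mem_iInter, mem_iUnion, Subtype.forall, mem_Iio]
      exact rankGE_iff
    rw [hset]
    exact (hD s).inter (.iInter fun β => .iUnion fun i => ih β β.2 (β.2.trans hα) _)

end Rank

theorem PiNat.map_res {α β : Type*} (f : α → β) (x : ℕ → α) (n : ℕ) :
    (res x n).map f = res (f ∘ x) n := by
  induction n with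
  | zero => rfl
  | succ n ih => simp [ih]

theorem PiNat.exists_cylinder_subset {E : ℕ → Type*} [∀ n, TopologicalSpace (E n)]
    [∀ n, DiscreteTopology (E n)] {x : ∀ n, E n} {U : Set (∀ n, E n)} (hU : U ∈ 𝓝 x) :
    ∃ n, cylinder x n ⊆ U := by
  obtain ⟨_, ⟨y, n, rfl⟩, hx, hyU⟩ := (isTopologicalBasis_cylinders E).mem_nhds_iff.1 hU
  exact ⟨n, mem_cylinder_iff_eq.1 hx ▸ hyU⟩

theorem PiNat.tendsto_of_forall_mem_cylinder {E : ℕ → Type*} [∀ n, TopologicalSpace (E n)]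
    [∀ n, DiscreteTopology (E n)] {z : ℕ → ∀ n, E n} {x : ∀ n, E n}
    (h : ∀ n, z n ∈ cylinder x n) : Tendsto z atTop (𝓝 x) := fun U hU => by
  obtain ⟨N, hN⟩ := exists_cylinder_subset hU
  exact mem_atTop_sets.2 ⟨N, fun n hn => hN (cylinder_anti x hn (h n))⟩

section Boundedness

variable {ι X : Type*} {D : List ι → Set X} {g : (ℕ → ℕ) → X}

/-- The branches of `searchTree D g` code the pairs `(z, b)` with `b` a branch of the tree
`s ↦ g z ∈ D s`. -/
def searchTree (D : List ι → Set X) (g : (ℕ → ℕ) → X) (v : List (ℕ × ι)) : Prop :=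
  ∃ z, res z v.length = v.map Prod.fst ∧ g z ∈ D (v.map Prod.snd)

theorem antitone_comp_res (hD : ∀ i s, D (i :: s) ⊆ D s) (c : ℕ → ι) :
    Antitone fun n => D (res c n) :=
  antitone_nat_of_succ_le fun n => hD (c n) (res c n)

theorem not_exists_res_searchTree [TopologicalSpace X] (hDc : ∀ s, IsClosed (D s))
    (hD : ∀ i s, D (i :: s) ⊆ D s) (hg : Continuous g)
    (hwf : ∀ z, ¬∃ b : ℕ → ι, ∀ n, g z ∈ D (res b n)) :
    ¬∃ bb : ℕ → ℕ × ι, ∀ n, searchTree D g (res bb n) := by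
  rintro ⟨bb, hbb⟩
  choose z hz hgz using hbb
  simp only [res_length, map_res] at hz hgz
  refine hwf (Prod.fst ∘ bb) ⟨Prod.snd ∘ bb, fun m => ?_⟩
  have hlim : Tendsto (fun n => g (z n)) atTop (𝓝 (g (Prod.fst ∘ bb))) :=
    (hg.tendsto _).comp (tendsto_of_forall_mem_cylinder fun n => by
      rw [cylinder_eq_res]; exact hz n)
  exact (hDc _).mem_of_tendsto hlim
    ((eventually_ge_atTop m).mono fun n hn => antitone_comp_res hD _ hn (hgz n))

theorem RankGE.searchTree {z : ℕ → ℕ} {α : Ordinal.{0}} {v : List (ℕ × ι)}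
    (hz : res z v.length = v.map Prod.fst) (h : RankGE (fun s => g z ∈ D s) α (v.map Prod.snd)) :
    RankGE (searchTree D g) α v := by
  induction α using WellFoundedLT.induction generalizing v with
  | ind α ih =>
    rw [rankGE_iff] at h ⊢
    refine ⟨⟨z, hz, h.1⟩, fun β hβ => ?_⟩
    obtain ⟨i, hi⟩ := h.2 β hβ
    exact ⟨(z v.length, i), ih β hβ (by simp [hz]) hi⟩

/-- Boundedness: every tree `s ↦ g z ∈ D s` embeds in the well-founded tree `searchTree D g`. -/
theorem exists_lt_omega_one_forall_not_rankGE [TopologicalSpace X] [Countable ι]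
    (hDc : ∀ s, IsClosed (D s)) (hD : ∀ i s, D (i :: s) ⊆ D s) (hg : Continuous g)
    (hwf : ∀ z, ¬∃ b : ℕ → ι, ∀ n, g z ∈ D (res b n)) :
    ∃ β < ω₁, ∀ z, ¬RankGE (fun s => g z ∈ D s) β [] := by
  have h := not_exists_res_searchTree hDc hD hg hwf
  rw [← forall_rankGE_iff_exists_res] at h
  push Not at h
  obtain ⟨β, hβ, hfail⟩ := h
  exact ⟨β, hβ, fun z hz => hfail (hz.searchTree (by simp))⟩

end Boundedness

section ImageTree

variable {X : Type*} [TopologicalSpace X] (f : (ℕ → ℕ) → X)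

def imageTree (s : List ℕ) : Set X :=
  closure (f '' {z | res z s.length = s})

theorem isClosed_imageTree (s : List ℕ) : IsClosed (imageTree f s) :=
  isClosed_closure

theorem imageTree_cons_subset (i : ℕ) (s : List ℕ) : imageTree f (i :: s) ⊆ imageTree f s :=
  closure_mono (image_mono fun _ hz => (List.cons.inj hz).2)

theorem apply_mem_imageTree_res (z : ℕ → ℕ) (n : ℕ) : f z ∈ imageTree f (res z n) :=
  subset_closure ⟨z, by simp, rfl⟩

theorem eq_of_forall_mem_imageTree_res [T3Space X] (hf : Continuous f) {b : ℕ → ℕ} {x : X}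
    (h : ∀ n, x ∈ imageTree f (res b n)) : f b = x := by
  by_contra hne
  obtain ⟨V, hV, hVc, hVx⟩ := exists_mem_nhds_isClosed_subset (isOpen_compl_singleton.mem_nhds hne)
  obtain ⟨n, hn⟩ := exists_cylinder_subset (hf.continuousAt.preimage_mem_nhds hV)
  have hsub : imageTree f (res b n) ⊆ V := closure_minimal (by
    rintro _ ⟨z, hz, rfl⟩
    exact hn (by rw [cylinder_eq_res]; simpa using hz)) hVc
  exact hVx (hsub (h n)) rfl

def approx (α : Ordinal.{0}) : Set X :=
  {x | RankGE (fun s => x ∈ imageTree f s) α []}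

theorem antitone_approx : Antitone (approx f) :=
  fun _ _ h _ hx => RankGE.mono hx h

theorem range_subset_approx (α : Ordinal.{0}) : range f ⊆ approx f α := by
  rintro _ ⟨z, rfl⟩
  exact rankGE_res_of_forall (apply_mem_imageTree_res f z) α 0

theorem mem_approx_iff_forall_lt {δ : Ordinal.{0}} (hδ : IsSuccLimit δ) {x : X} :
    x ∈ approx f δ ↔ ∀ γ < δ, x ∈ approx f γ :=
  rankGE_iff_forall_lt hδ

theorem measurableSet_approx [MeasurableSpace X] [OpensMeasurableSpace X] {α : Ordinal.{0}}
    (hα : α < ω₁) : MeasurableSet (approx f α) :=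
  measurableSet_setOf_rankGE (fun s => (isClosed_imageTree f s).measurableSet) hα []

theorem mem_range_iff_forall_mem_approx [T3Space X] (hf : Continuous f) {x : X} :
    x ∈ range f ↔ ∀ α < ω₁, x ∈ approx f α := by
  refine ⟨fun hx α _ => range_subset_approx f α hx, fun hx => ?_⟩
  obtain ⟨b, hb⟩ := exists_res_of_forall_rankGE hx
  exact ⟨b, eq_of_forall_mem_imageTree_res f hf hb⟩

end ImageTree

section Composition

variable {Y : Type*} [TopologicalSpace Y] {f : (ℕ → ℕ) → Y × Y}

variable (f) in
/-- The branches of `pairTree f` at `(x, y, z)` are the pairs of branches of the trees of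
`(x, y)` and of `(y, z)`. -/
def pairTree (l : List (ℕ × ℕ)) : Set (Y × Y × Y) :=
  {w | (w.1, w.2.1) ∈ imageTree f (l.map Prod.fst) ∧
    (w.2.1, w.2.2) ∈ imageTree f (l.map Prod.snd)}

theorem isClosed_pairTree (l : List (ℕ × ℕ)) : IsClosed (pairTree f l) :=
  ((isClosed_imageTree f _).preimage (by fun_prop)).inter
    ((isClosed_imageTree f _).preimage (by fun_prop))

theorem pairTree_cons_subset (j : ℕ × ℕ) (l : List (ℕ × ℕ)) :
    pairTree f (j :: l) ⊆ pairTree f l :=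
  fun _ hw => ⟨imageTree_cons_subset f _ _ hw.1, imageTree_cons_subset f _ _ hw.2⟩

theorem exists_approx_comp_approx_subset [PolishSpace Y] [MeasurableSpace Y] [BorelSpace Y]
    (hf : Continuous f) (htrans : range f ○ range f ⊆ range f) {α : Ordinal.{0}}
    (hα : α < ω₁) : ∃ β < ω₁, approx f β ○ approx f β ⊆ approx f α := by
  set W : Set (Y × Y × Y) := (fun w => (w.1, w.2.2)) ⁻¹' (approx f α)ᶜ
  have hW : AnalyticSet W :=
    ((measurableSet_approx f hα).compl.preimage (by fun_prop)).analyticSet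
  rw [AnalyticSet_def] at hW
  rcases hW with hW | ⟨g, hg, hgW⟩
  · refine ⟨α, hα, ?_⟩
    rintro ⟨x, z⟩ ⟨y, -, -⟩
    by_contra hxz
    exact (hW.subset (show (x, y, z) ∈ W from hxz) : (x, y, z) ∈ (∅ : Set _))
  have hwf : ∀ z, ¬∃ b, ∀ n, g z ∈ pairTree f (res b n) := by
    rintro z ⟨b, hb⟩
    have h₁ : ((g z).1, (g z).2.1) ∈ range f :=
      ⟨_, eq_of_forall_mem_imageTree_res f hf fun n => by simpa [map_res] using (hb n).1⟩
    have h₂ : ((g z).2.1, (g z).2.2) ∈ range f :=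
      ⟨_, eq_of_forall_mem_imageTree_res f hf fun n => by simpa [map_res] using (hb n).2⟩
    exact (hgW ▸ mem_range_self z : g z ∈ W) (range_subset_approx f α (htrans ⟨_, h₁, h₂⟩))
  obtain ⟨β, hβ, hbound⟩ := exists_lt_omega_one_forall_not_rankGE isClosed_pairTree
    pairTree_cons_subset hg hwf
  refine ⟨β, hβ, ?_⟩
  rintro ⟨x, z⟩ ⟨y, hxy, hyz⟩
  by_contra hxz
  obtain ⟨w, hw⟩ : (x, y, z) ∈ range g := hgW ▸ hxz
  apply hbound w
  rw [hw]
  exact RankGE.prodMk (l := []) hxy hyz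

end Composition

theorem SetRel.inter_inv_comp_inter_inv_subset {α : Type*} {R T : SetRel α α} (h : R ○ R ⊆ T) :
    (R ∩ R.inv) ○ (R ∩ R.inv) ⊆ T ∩ T.inv := by
  rintro ⟨x, z⟩ ⟨y, ⟨hxy, hyx⟩, hyz, hzy⟩
  exact ⟨h ⟨y, hxy, hyz⟩, h ⟨y, hzy, hyx⟩⟩

section Symmetrization

variable {Y : Type*} [TopologicalSpace Y] {f : (ℕ → ℕ) → Y × Y}

variable (f) in
def symmApprox (α : Ordinal.{0}) : SetRel Y Y :=
  approx f α ∩ SetRel.inv (approx f α)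

theorem antitone_symmApprox : Antitone (symmApprox f) := fun _ _ h =>
  inter_subset_inter (antitone_approx f h) (inv_mono (antitone_approx f h))

theorem measurableSet_symmApprox [SecondCountableTopology Y] [MeasurableSpace Y] [BorelSpace Y]
    {α : Ordinal.{0}} (hα : α < ω₁) : MeasurableSet (symmApprox f α) :=
  (measurableSet_approx f hα).inter (measurable_swap (measurableSet_approx f hα))

theorem mem_symmApprox_iff_forall_lt {δ : Ordinal.{0}} (hδ : IsSuccLimit δ) {p : Y × Y} :
    p ∈ symmApprox f δ ↔ ∀ γ < δ, p ∈ symmApprox f γ := by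
  simp only [symmApprox, mem_inter_iff, mem_inv, mem_approx_iff_forall_lt f hδ, forall₂_and]

theorem exists_symmApprox_comp_symmApprox_subset [PolishSpace Y] [MeasurableSpace Y]
    [BorelSpace Y] (hf : Continuous f) (htrans : range f ○ range f ⊆ range f) {α : Ordinal.{0}}
    (hα : α < ω₁) : ∃ β < ω₁, symmApprox f β ○ symmApprox f β ⊆ symmApprox f α := by
  obtain ⟨β, hβ, h⟩ := exists_approx_comp_approx_subset hf htrans hα
  exact ⟨β, hβ, inter_inv_comp_inter_inv_subset h⟩

theorem equivalence_symmApprox (hrefl : ∀ y, (y, y) ∈ range f) {δ : Ordinal.{0}}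
    (hδ : IsSuccLimit δ)
    (hcomp : ∀ γ < δ, ∃ β < δ, symmApprox f β ○ symmApprox f β ⊆ symmApprox f γ) :
    Equivalence fun x y => (x, y) ∈ symmApprox f δ where
  refl y := ⟨range_subset_approx f δ (hrefl y), range_subset_approx f δ (hrefl y)⟩
  symm h := ⟨h.2, h.1⟩
  trans {x y z} hxy hyz := (mem_symmApprox_iff_forall_lt hδ).2 fun γ hγ => by
    obtain ⟨β, hβδ, hβ⟩ := hcomp γ hγ
    exact hβ ⟨y, antitone_symmApprox hβδ.le hxy, antitone_symmApprox hβδ.le hyz⟩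

end Symmetrization

theorem exists_isSuccLimit_closed_lt_omega_one {P : Ordinal.{0} → Ordinal.{0} → Prop}
    (hP : ∀ ⦃γ γ' β⦄, γ ≤ γ' → P γ' β → P γ β) (h : ∀ γ < ω₁, ∃ β < ω₁, P γ β)
    {a : Ordinal.{0}} (ha : a < ω₁) :
    ∃ δ, a < δ ∧ δ < ω₁ ∧ IsSuccLimit δ ∧ ∀ γ < δ, ∃ β < δ, P γ β := by
  classical
  obtain ⟨G, hG⟩ : ∃ G : Ordinal.{0} → Ordinal.{0}, ∀ γ < ω₁, G γ < ω₁ ∧ P γ (G γ) :=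
    ⟨fun γ => if hγ : γ < ω₁ then (h γ hγ).choose else 0, fun γ hγ => by
      simpa [hγ] using (h γ hγ).choose_spec⟩
  set H : Ordinal.{0} → Ordinal.{0} := fun γ => max (succ γ) (G γ)
  have hH : ∀ γ, γ < H γ := fun γ => (lt_succ γ).trans_le (le_max_left _ _)
  have hiter : ∀ n, H^[n] a < nfp H a := fun n =>
    (hH _).trans_le (by rw [← Function.iterate_succ_apply' H]; exact iterate_le_nfp H a _)
  have hδ : nfp H a < ω₁ := nfp_lt_ord (by simp)
    (fun γ hγ => max_lt ((Cardinal.isSuccLimit_omega 1).succ_lt hγ) (hG γ hγ).1) ha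
  refine ⟨nfp H a, hiter 0, hδ, ?_, fun γ hγ => ?_⟩
  · refine isSuccLimit_iff.2 ⟨(zero_le.trans_lt (hiter 0)).ne',
      isSuccPrelimit_of_succ_lt fun β hβ => ?_⟩
    obtain ⟨n, hn⟩ := lt_nfp_iff.1 hβ
    exact (succ_le_of_lt hn).trans_lt (hiter n)
  obtain ⟨n, hn⟩ := lt_nfp_iff.1 hγ
  have hn' := (hiter n).trans hδ
  have hnext : H (H^[n] a) < nfp H a := by
    rw [← Function.iterate_succ_apply' H]
    exact hiter (n + 1)
  exact ⟨G (H^[n] a), (le_max_right _ _).trans_lt hnext, hP hn.le (hG _ hn').2⟩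

/-- For every analytic equivalence relation `E` on Cantor space there is a
family `(E_α)` indexed by the countable ordinals `α < ω₁` of equivalence relations on `2^ω`
such that: (i) each `E_α` is Borel; (ii) the family is decreasing (`α ≤ β < ω₁` implies
`E_β ⊆ E_α`); and (iii) `E = ⋂_{α < ω₁} E_α`. -/
theorem statement12 (E : Set (Cantor × Cantor)) (hE : AnalyticSet E)
    (heq : Equivalence fun X Y : Cantor => (X, Y) ∈ E) :
    ∃ F : Ordinal.{0} → Set (Cantor × Cantor),
      (∀ α < (Cardinal.aleph 1).ord, Equivalence fun X Y : Cantor => (X, Y) ∈ F α) ∧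
      (∀ α < (Cardinal.aleph 1).ord, MeasurableSet[borel (Cantor × Cantor)] (F α)) ∧
      (∀ α β : Ordinal.{0}, α ≤ β → β < (Cardinal.aleph 1).ord → F β ⊆ F α) ∧
      (∀ X Y : Cantor, (X, Y) ∈ E ↔ ∀ α < (Cardinal.aleph 1).ord, (X, Y) ∈ F α) := by
  rw [Cardinal.ord_aleph, ← BorelSpace.measurable_eq]
  have : PolishSpace Cantor := {}
  rw [AnalyticSet_def] at hE
  obtain ⟨f, hf, rfl⟩ := hE.resolve_left (nonempty_of_mem (heq.refl default)).ne_empty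
  have htrans : range f ○ range f ⊆ range f := fun _ ⟨_, hxy, hyz⟩ => heq.trans hxy hyz
  let good (α δ : Ordinal.{0}) : Prop := α < δ ∧ δ < ω₁ ∧ IsSuccLimit δ ∧
    ∀ γ < δ, ∃ β < δ, symmApprox f β ○ symmApprox f β ⊆ symmApprox f γ
  have hgood (α : Ordinal.{0}) (hα : α < ω₁) : {δ | good α δ}.Nonempty :=
    exists_isSuccLimit_closed_lt_omega_one (fun _ _ _ hγ h => h.trans (antitone_symmApprox hγ))
      (fun _ => exists_symmApprox_comp_symmApprox_subset hf htrans) hα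
  have hc (α : Ordinal.{0}) (hα : α < ω₁) : good α (sInf {δ | good α δ}) := csInf_mem (hgood α hα)
  refine ⟨fun α => symmApprox f (sInf {δ | good α δ}), fun α hα => ?_, fun α hα => ?_,
    fun α β hαβ hβ => ?_, fun X Y => ?_⟩
  · exact equivalence_symmApprox heq.refl (hc α hα).2.2.1 (hc α hα).2.2.2
  · exact measurableSet_symmApprox (hc α hα).2.1
  · exact antitone_symmApprox
      (csInf_le_csInf' (hgood β hβ) fun δ hδ => ⟨hαβ.trans_lt hδ.1, hδ.2⟩)
  · refine ⟨fun h α _ => ⟨range_subset_approx f _ h, range_subset_approx f _ (heq.symm h)⟩,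
      fun h => (mem_range_iff_forall_mem_approx f hf).2 fun α hα => ?_⟩
    exact antitone_approx f (hc α hα).1.le (h α hα).1
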